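/- For every unit vector direction: given rational v ∈ ℚᵈ with v₁ = 1 and v₂² + ⋯ + v_d² < 1, and every ε > 0, there exists w ∈ ℚᵈ with |v − w| < ε such that w = L*(e₁)/L*(e₁)₁ for some Lorentz transformation L* of ℝᵈ mapping ℚᵈ into ℚᵈ (where e₁ = (1,0,…,0)). -/

import Mathlib

/-!
For a Lorentz map `L`, the vector `w = L e₁ / (L e₁)₀` satisfies `1 - |w'|² = 1 / (L e₁)₀²`, so
the attainable rational `w` are those for which `1 - |w'|²` is a rational square. For
`w = (1, λ v')` this asks for a rational point `(λ, c)` on the conic `λ² m + c² = 1`, where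
`m = |v'|²`. Its rational parametrization `λ = 2T / (m T² + 1)` reaches `λ = 1` at a real `T`,
so rational `T` nearby give rational `λ` near `1`. Then `p = -c⁻¹ • (1, λ v')` lies on the
hyperboloid `mink p = 1`, and the Minkowski reflection in `e₁ - p` is a Lorentz map preserving
rational vectors and sending `e₁` to `p`.
-/

/-- The Minkowski quadratic form. -/
noncomputable def mink (d : ℕ) (x : EuclideanSpace ℝ (Fin (d + 2))) : ℝ :=
  x 0 ^ 2 - ∑ i ∈ Finset.univ.filter (fun i => i ≠ (0 : Fin (d + 2))), x i ^ 2

open Topology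

namespace LinearMap.BilinForm

variable {K M : Type*} [Field K] [AddCommGroup M] [Module K M] {B : LinearMap.BilinForm K M}
  {q : M}

noncomputable def reflection (hq : B q q ≠ 0) : M ≃ₗ[K] M :=
  Module.reflection (f := (2 / B q q) • B q) (div_mul_cancel₀ _ hq)

lemma reflection_apply (hq : B q q ≠ 0) (y : M) :
    reflection hq y = y - (2 * B q y / B q q) • q := by
  rw [reflection, Module.reflection_apply, LinearMap.smul_apply, smul_eq_mul, div_mul_eq_mul_div]

lemma isOrthogonal_reflection (hB : B.IsSymm) (hq : B q q ≠ 0) :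
    LinearMap.IsOrthogonal B (reflection hq) := by
  intro x y
  simp only [reflection_apply, map_sub, map_smul, LinearMap.sub_apply, LinearMap.smul_apply,
    smul_eq_mul, hB.eq x q]
  field_simp
  ring

lemma apply_sub_sub_of_apply_self_eq (hB : B.IsSymm) {e p : M} (hep : B e e = B p p) :
    B (e - p) (e - p) = 2 * (B e e - B e p) := by
  simp only [map_sub, LinearMap.sub_apply, hB.eq p e, ← hep]
  ring

lemma reflection_sub_apply_left (hB : B.IsSymm) {e p : M} (hep : B e e = B p p)
    (h : B (e - p) (e - p) ≠ 0) : reflection h e = p := by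
  have h' := apply_sub_sub_of_apply_self_eq hB hep ▸ h
  rw [reflection_apply, apply_sub_sub_of_apply_self_eq hB hep, map_sub, LinearMap.sub_apply,
    hB.eq p e, div_self h', one_smul, sub_sub_cancel]

end LinearMap.BilinForm

open Finset in
noncomputable def minkForm (d : ℕ) : LinearMap.BilinForm ℝ (EuclideanSpace ℝ (Fin (d + 2))) :=
  LinearMap.mk₂ ℝ (fun x y => x 0 * y 0 - ∑ i ∈ univ.filter (· ≠ 0), x i * y i)
    (fun x y z => by simp only [PiLp.add_apply, add_mul, sum_add_distrib]; ring)
    (fun c x y => by simp only [PiLp.smul_apply, smul_eq_mul, mul_sum, mul_assoc, mul_sub])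
    (fun x y z => by simp only [PiLp.add_apply, mul_add, sum_add_distrib]; ring)
    (fun c x y => by simp only [PiLp.smul_apply, smul_eq_mul, mul_sum, mul_left_comm c, mul_sub])

section Minkowski

open Finset

variable {d : ℕ}

lemma minkForm_apply (x y : EuclideanSpace ℝ (Fin (d + 2))) :
    minkForm d x y = x 0 * y 0 - ∑ i ∈ univ.filter (· ≠ 0), x i * y i := rfl

lemma isSymm_minkForm : (minkForm d).IsSymm :=
  ⟨fun x y => by simp only [minkForm_apply, mul_comm]⟩

lemma minkForm_self (x : EuclideanSpace ℝ (Fin (d + 2))) : minkForm d x x = mink d x := by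
  simp only [minkForm_apply, mink, sq]

lemma minkForm_single_zero_left (y : EuclideanSpace ℝ (Fin (d + 2))) :
    minkForm d (EuclideanSpace.single 0 1) y = y 0 := by
  simp [minkForm_apply]

lemma mink_smul (a : ℝ) (x : EuclideanSpace ℝ (Fin (d + 2))) :
    mink d (a • x) = a ^ 2 * mink d x := by
  simp only [← minkForm_self, map_smul, LinearMap.smul_apply, smul_eq_mul]
  ring

lemma mink_sub_smul_add_smul {v : EuclideanSpace ℝ (Fin (d + 2))} (hv : v 0 = 1) (l : ℝ) :
    mink d ((1 - l) • EuclideanSpace.single 0 1 + l • v) = 1 - l ^ 2 * (1 - mink d v) := by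
  have he : minkForm d (EuclideanSpace.single 0 1) (EuclideanSpace.single 0 1) = 1 := by
    rw [minkForm_single_zero_left]; simp
  rw [← minkForm_self, ← minkForm_self]
  simp only [map_add, map_smul, LinearMap.add_apply, LinearMap.smul_apply, smul_eq_mul,
    minkForm_single_zero_left, isSymm_minkForm.eq v, he, hv]
  ring

end Minkowski

def HasCoordsIn {ι : Type*} (S : Subfield ℝ) (x : EuclideanSpace ℝ ι) : Prop :=
  ∀ i, x i ∈ S

lemma hasCoordsIn_ratCast_iff {ι : Type*} (x : EuclideanSpace ℝ ι) :
    HasCoordsIn (Rat.castHom ℝ).fieldRange x ↔ ∀ i, ∃ r : ℚ, x i = r := by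
  simp [HasCoordsIn, RingHom.mem_fieldRange, eq_comm]

lemma hasCoordsIn_single {ι : Type*} [DecidableEq ι] (S : Subfield ℝ) (j : ι) :
    HasCoordsIn S (EuclideanSpace.single j (1 : ℝ)) := fun i => by
  rw [PiLp.single_apply]
  split_ifs
  exacts [one_mem S, zero_mem S]

section Coords

variable {d : ℕ} {S : Subfield ℝ}

lemma minkForm_mem {x y : EuclideanSpace ℝ (Fin (d + 2))} (hx : HasCoordsIn S x)
    (hy : HasCoordsIn S y) : minkForm d x y ∈ S :=
  sub_mem (mul_mem (hx 0) (hy 0)) (sum_mem fun i _ => mul_mem (hx i) (hy i))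

lemma HasCoordsIn.minkForm_reflection {q x : EuclideanSpace ℝ (Fin (d + 2))}
    (hxS : HasCoordsIn S x) (hq : minkForm d q q ≠ 0) (hqS : HasCoordsIn S q) :
    HasCoordsIn S (LinearMap.BilinForm.reflection hq x) := fun i => by
  rw [LinearMap.BilinForm.reflection_apply, PiLp.sub_apply, PiLp.smul_apply, smul_eq_mul]
  exact sub_mem (hxS i) (mul_mem (div_mem (mul_mem (ofNat_mem S 2) (minkForm_mem hqS hxS))
    (minkForm_mem hqS hqS)) (hqS i))

theorem exists_lorentz_apply_single_zero_eq {p : EuclideanSpace ℝ (Fin (d + 2))}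
    (hpS : HasCoordsIn S p) (hp : mink d p = 1) (hp0 : p 0 ≠ 1) :
    ∃ L : EuclideanSpace ℝ (Fin (d + 2)) ≃ₗ[ℝ] EuclideanSpace ℝ (Fin (d + 2)),
      (∀ x, mink d (L x) = mink d x) ∧ (∀ x, HasCoordsIn S x → HasCoordsIn S (L x)) ∧
      L (EuclideanSpace.single 0 1) = p := by
  set e : EuclideanSpace ℝ (Fin (d + 2)) := EuclideanSpace.single 0 1
  have hep : minkForm d e e = minkForm d p p := by
    rw [minkForm_single_zero_left, minkForm_self, hp]; simp [e]
  have hq : minkForm d (e - p) (e - p) ≠ 0 := by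
    rw [LinearMap.BilinForm.apply_sub_sub_of_apply_self_eq isSymm_minkForm hep, hep,
      minkForm_single_zero_left, minkForm_self, hp]
    exact mul_ne_zero two_ne_zero (sub_ne_zero.2 hp0.symm)
  refine ⟨LinearMap.BilinForm.reflection hq, fun x => ?_, fun x hx => ?_,
    LinearMap.BilinForm.reflection_sub_apply_left isSymm_minkForm hep hq⟩
  · rw [← minkForm_self, LinearMap.BilinForm.isOrthogonal_reflection isSymm_minkForm,
      minkForm_self]
  · exact hx.minkForm_reflection hq (fun i => sub_mem (hasCoordsIn_single S 0 i) (hpS i))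

end Coords

theorem exists_one_sub_sq_mul_eq_sq_of_mem_nhds_one (S : Subfield ℝ) {m : ℝ} (hmS : m ∈ S)
    (hm0 : 0 ≤ m) (hm1 : m < 1) {U : Set ℝ} (hU : U ∈ 𝓝 1) :
    ∃ l ∈ S, l ∈ U ∧ ∃ c ∈ S, 0 < c ∧ 1 - l ^ 2 * m = c ^ 2 := by
  set g : ℝ → ℝ := fun T => 2 * T / (m * T ^ 2 + 1)
  obtain ⟨s, hs, hs2⟩ : ∃ s : ℝ, 0 < s ∧ s ^ 2 = 1 - m :=
    ⟨√(1 - m), Real.sqrt_pos.2 (by linarith), Real.sq_sqrt (by linarith)⟩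
  -- `t` solves `g t = 1`, i.e. `m t² - 2 t + 1 = 0`
  set t := (1 + s)⁻¹
  have hmt : m * t ^ 2 < 1 := by
    rw [inv_pow, ← div_eq_mul_inv, div_lt_one (by positivity)]
    nlinarith
  have hgt : g t = 1 := by
    simp only [g, t]
    field_simp
    linear_combination -hs2
  have hV : g ⁻¹' U ∩ {T | m * T ^ 2 < 1} ∈ 𝓝 t := by
    refine Filter.inter_mem (ContinuousAt.preimage_mem_nhds (by fun_prop (disch := positivity))
      (hgt ▸ hU)) ((isOpen_lt (by fun_prop) continuous_const).mem_nhds hmt)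
  obtain ⟨T, hTU, hTm⟩ := Rat.denseRange_cast.mem_nhds hV
  have hTS : (T : ℝ) ∈ S := SubfieldClass.ratCast_mem S T
  have hden : (m * T ^ 2 + 1) ∈ S := add_mem (mul_mem hmS (pow_mem hTS 2)) (one_mem S)
  refine ⟨g T, div_mem (mul_mem (ofNat_mem S 2) hTS) hden, hTU, (1 - m * T ^ 2) / (m * T ^ 2 + 1),
    div_mem (sub_mem (one_mem S) (mul_mem hmS (pow_mem hTS 2))) hden,
    div_pos (sub_pos.2 hTm) (by positivity), ?_⟩
  simp only [g]
  field_simp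
  ring

/-- Every rational velocity vector of speed < 1 can be approximated by the
normalized image of e₁ under a Lorentz transformation preserving ℚᵈ. -/
theorem rational_velocity_from_rational_lorentz (d : ℕ)
    (v : EuclideanSpace ℝ (Fin (d + 2))) (hvQ : ∀ i, ∃ r : ℚ, v i = (r : ℝ))
    (hv1 : v 0 = 1)
    (hvs : ∑ i ∈ Finset.univ.filter (fun i => i ≠ (0 : Fin (d + 2))), v i ^ 2 < 1)
    (ε : ℝ) (hε : 0 < ε) :
    ∃ w : EuclideanSpace ℝ (Fin (d + 2)),
      (∀ i, ∃ r : ℚ, w i = (r : ℝ)) ∧ ‖v - w‖ < ε ∧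
      ∃ Ls : EuclideanSpace ℝ (Fin (d + 2)) ≃ₗ[ℝ] EuclideanSpace ℝ (Fin (d + 2)),
        (∀ x, mink d (Ls x) = mink d x) ∧
        (∀ x : EuclideanSpace ℝ (Fin (d + 2)), (∀ i, ∃ r : ℚ, x i = (r : ℝ)) →
          (∀ i, ∃ r : ℚ, Ls x i = (r : ℝ))) ∧
        w = (Ls (EuclideanSpace.single 0 1) 0)⁻¹ • Ls (EuclideanSpace.single 0 1) := by
  set S := (Rat.castHom ℝ).fieldRange
  have hvS : HasCoordsIn S v := (hasCoordsIn_ratCast_iff v).2 hvQ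
  have hmink : mink d v = 1 - ∑ i ∈ Finset.univ.filter (· ≠ 0), v i ^ 2 := by
    rw [mink, hv1, one_pow]
  set e : EuclideanSpace ℝ (Fin (d + 2)) := EuclideanSpace.single 0 1
  set w : ℝ → EuclideanSpace ℝ (Fin (d + 2)) := fun l => (1 - l) • e + l • v
  have hU : w ⁻¹' Metric.ball v ε ∈ 𝓝 1 :=
    ContinuousAt.preimage_mem_nhds (by fun_prop) (by simpa [w] using Metric.ball_mem_nhds v hε)
  obtain ⟨l, hlS, hlU, c, hcS, hc, hlc⟩ := exists_one_sub_sq_mul_eq_sq_of_mem_nhds_one S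
    (sum_mem fun i _ => pow_mem (hvS i) 2) (Finset.sum_nonneg fun i _ => sq_nonneg _) hvs hU
  have hw0 : w l 0 = 1 := by simp [w, e, hv1]
  have hwS : HasCoordsIn S (w l) := fun i =>
    add_mem (mul_mem (sub_mem (one_mem S) hlS) (hasCoordsIn_single S 0 i)) (mul_mem hlS (hvS i))
  -- the minus sign keeps `p 0 ≠ 1`, so that `e₁ - p` is not isotropic
  obtain ⟨L, hL, hLS, hLe⟩ := exists_lorentz_apply_single_zero_eq
    (S := S) (p := (-c⁻¹) • w l)
    (fun i => mul_mem (neg_mem (inv_mem hcS)) (hwS i))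
    (by rw [mink_smul, mink_sub_smul_add_smul hv1, hmink, sub_sub_cancel, hlc]; field_simp)
    (by simp only [PiLp.smul_apply, hw0, smul_eq_mul]; nlinarith [inv_pos.2 hc])
  refine ⟨w l, (hasCoordsIn_ratCast_iff _).1 hwS, by simpa [dist_eq_norm'] using hlU, L, hL,
    fun x hx => (hasCoordsIn_ratCast_iff _).1 (hLS x ((hasCoordsIn_ratCast_iff x).2 hx)), ?_⟩
  rw [hLe, PiLp.smul_apply, hw0, smul_eq_mul, mul_one, inv_neg, inv_inv, smul_smul, neg_mul_neg,
    mul_inv_cancel₀ hc.ne', one_smul]
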